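/- A string s ∈ Σ^n is a Motzkin path if and only if s is equivalent under the local moves to the all-zeros string c_{0,0} = 0^n. -/

import Mathlib

/-- The three-letter alphabet `Σ = {0, l, r}` (named `Tri` to avoid a clash with Mathlib). -/
inductive Tri : Type
  | zero : Tri
  | left : Tri
  | right : Tri
  deriving DecidableEq

/-- One local move: `00 ↔ lr`, `0l ↔ l0`, or `0r ↔ r0`, applied at some pair of
consecutive positions. -/
def Move (s t : List Tri) : Prop :=
  ∃ u v : List Tri,
    (s = u ++ [Tri.zero, Tri.zero] ++ v ∧ t = u ++ [Tri.left, Tri.right] ++ v) ∨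
    (s = u ++ [Tri.left, Tri.right] ++ v ∧ t = u ++ [Tri.zero, Tri.zero] ++ v) ∨
    (s = u ++ [Tri.zero, Tri.left] ++ v ∧ t = u ++ [Tri.left, Tri.zero] ++ v) ∨
    (s = u ++ [Tri.left, Tri.zero] ++ v ∧ t = u ++ [Tri.zero, Tri.left] ++ v) ∨
    (s = u ++ [Tri.zero, Tri.right] ++ v ∧ t = u ++ [Tri.right, Tri.zero] ++ v) ∨
    (s = u ++ [Tri.right, Tri.zero] ++ v ∧ t = u ++ [Tri.zero, Tri.right] ++ v)

/-- Equivalence of strings: `s ~ t` iff `t` can be obtained from `s` by a finite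
sequence of local moves. -/
def MoveEquiv (s t : List Tri) : Prop := Relation.ReflTransGen Move s t

/-- The canonical string `c_{p,q}` of length `n`: `p` letters `r`, followed by
`n - p - q` letters `0`, followed by `q` letters `l`. -/
def cStr (n p q : ℕ) : List Tri :=
  List.replicate p Tri.right ++ List.replicate (n - p - q) Tri.zero ++
    List.replicate q Tri.left

/-- A string is a Motzkin path iff every prefix contains at least as many `l`'s as
`r`'s and the total number of `l`'s equals the total number of `r`'s. -/
def IsMotzkin (s : List Tri) : Prop :=
  (∀ j : ℕ, (s.take j).count Tri.right ≤ (s.take j).count Tri.left) ∧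
    s.count Tri.left = s.count Tri.right

/-! ### Auxiliary machinery -/

/-- Weight of a letter: `l ↦ 1`, `r ↦ -1`, `0 ↦ 0`. -/
def wt : Tri → ℤ
  | Tri.zero => 0
  | Tri.left => 1
  | Tri.right => -1

/-- Height of a string. -/
def Ht (s : List Tri) : ℤ := (s.map wt).sum

lemma Ht_nil : Ht [] = 0 := rfl

lemma Ht_cons (a : Tri) (s : List Tri) : Ht (a :: s) = wt a + Ht s := by
  simp [Ht]

lemma Ht_append (s t : List Tri) : Ht (s ++ t) = Ht s + Ht t := by
  simp [Ht]

lemma Ht_eq (s : List Tri) :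
    Ht s = (s.count Tri.left : ℤ) - (s.count Tri.right : ℤ) := by
  induction s with
  | nil => simp [Ht]
  | cons a s ih =>
    rw [Ht_cons, ih]
    cases a <;> simp [wt, List.count_cons] <;> ring

/-- Prefix-nonnegativity condition. -/
def Good (s : List Tri) : Prop := ∀ p : List Tri, p <+: s → 0 ≤ Ht p

lemma isMotzkin_iff (s : List Tri) : IsMotzkin s ↔ Good s ∧ Ht s = 0 := by
  constructor
  · rintro ⟨h1, h2⟩
    refine ⟨?_, ?_⟩
    · intro p hp
      rw [List.prefix_iff_eq_take] at hp
      rw [hp, Ht_eq]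
      have := h1 p.length
      omega
    · rw [Ht_eq]; omega
  · rintro ⟨h1, h2⟩
    rw [Ht_eq] at h2
    constructor
    · intro j
      have := h1 (s.take j) (List.take_prefix j s)
      rw [Ht_eq] at this
      omega
    · omega

lemma prefix_cases {p x y : List Tri} (h : p <+: x ++ y) :
    p <+: x ∨ ∃ q, p = x ++ q ∧ q <+: y := by
  obtain ⟨r, hr⟩ := h
  rcases List.append_eq_append_iff.mp hr with ⟨a, ha1, _⟩ | ⟨c, hc1, hc2⟩
  · exact Or.inl ⟨a, ha1.symm⟩
  · exact Or.inr ⟨c, hc1, r, hc2.symm⟩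

lemma good_replace (u v : List Tri) (a b c d : Tri)
    (hsum : wt a + wt b = wt c + wt d)
    (hg : Good (u ++ [a, b] ++ v))
    (hmid : 0 ≤ Ht u + wt c) :
    Good (u ++ [c, d] ++ v) := by
  have hu : 0 ≤ Ht u := hg u ((List.prefix_append u [a, b]).trans (List.prefix_append _ v))
  intro p hp
  rw [List.append_assoc] at hp
  rcases prefix_cases hp with h1 | ⟨q, hq, hq2⟩
  · exact hg p (h1.trans ((List.prefix_append u [a, b]).trans (List.prefix_append _ v)))
  · subst hq
    rcases q with _ | ⟨e, q⟩
    · simpa [Ht_append] using hu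
    · obtain ⟨he, hq3⟩ := List.cons_prefix_cons.mp hq2
      subst he
      rcases q with _ | ⟨f, q⟩
      · simpa [Ht_append, Ht_cons, Ht_nil] using hmid
      · obtain ⟨hf, hq4⟩ := List.cons_prefix_cons.mp hq3
        subst hf
        obtain ⟨w, hw⟩ := hq4
        have := hg (u ++ [a, b] ++ q) (by
          rw [List.append_assoc]
          exact ⟨w, by simpa using hw⟩)
        simp only [Ht_append, Ht_cons, Ht_nil] at this ⊢
        linarith

lemma move_motzkin {s t : List Tri} (h : Move s t) (hm : IsMotzkin s) : IsMotzkin t := by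
  rw [isMotzkin_iff] at hm ⊢
  obtain ⟨hg, hz⟩ := hm
  obtain ⟨u, v, hc⟩ := h
  have hu : 0 ≤ Ht u := by
    rcases hc with ⟨h1, _⟩ | ⟨h1, _⟩ | ⟨h1, _⟩ | ⟨h1, _⟩ | ⟨h1, _⟩ | ⟨h1, _⟩ <;>
      exact hg u (by rw [h1]; exact (List.prefix_append u _).trans (List.prefix_append _ v))
  rcases hc with ⟨h1, h2⟩ | ⟨h1, h2⟩ | ⟨h1, h2⟩ | ⟨h1, h2⟩ | ⟨h1, h2⟩ | ⟨h1, h2⟩ <;>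
    subst h1 <;> subst h2 <;>
    refine ⟨good_replace u v _ _ _ _ (by simp [wt]) hg ?_,
      by simp only [Ht_append, Ht_cons, Ht_nil, wt] at hz ⊢; linarith⟩
  · simp [wt]; linarith
  · simp [wt]; linarith
  · simp [wt]; linarith
  · simp [wt]; linarith
  · -- 0r → r0 : need 0 ≤ Ht u - 1, from the prefix u ++ [zero, right]
    have := hg (u ++ [Tri.zero, Tri.right]) ⟨v, by simp⟩
    simp only [Ht_append, Ht_cons, Ht_nil, wt] at this ⊢
    linarith
  · simp [wt]; linarith

lemma move_symm {s t : List Tri} (h : Move s t) : Move t s := by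
  obtain ⟨u, v, hc⟩ := h
  exact ⟨u, v, by tauto⟩

lemma moveEquiv_motzkin {s t : List Tri} (h : MoveEquiv s t) (hm : IsMotzkin s) :
    IsMotzkin t := by
  induction h with
  | refl => exact hm
  | tail _ hmove ih => exact move_motzkin hmove ih

lemma motzkin_replicate (n : ℕ) : IsMotzkin (List.replicate n Tri.zero) := by
  constructor
  · intro j
    simp [List.take_replicate, List.count_replicate]
  · simp [List.count_replicate]

lemma chain_lemma (k : ℕ) : ∀ u v : List Tri,
    MoveEquiv (u ++ Tri.left :: (List.replicate k Tri.zero ++ Tri.right :: v))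
      (u ++ List.replicate (k + 2) Tri.zero ++ v) := by
  induction k with
  | zero =>
    intro u v
    exact Relation.ReflTransGen.single
      ⟨u, v, Or.inr (Or.inl ⟨by simp, by simp [List.replicate]⟩)⟩
  | succ k ih =>
    intro u v
    apply Relation.ReflTransGen.head
      (b := u ++ [Tri.zero, Tri.left] ++ (List.replicate k Tri.zero ++ Tri.right :: v))
    · exact ⟨u, List.replicate k Tri.zero ++ Tri.right :: v,
        Or.inr (Or.inr (Or.inr (Or.inl ⟨by simp [List.replicate_succ], rfl⟩)))⟩
    · have := ih (u ++ [Tri.zero]) v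
      have heq : (u ++ [Tri.zero]) ++ List.replicate (k + 2) Tri.zero ++ v
          = u ++ List.replicate (k + 1 + 2) Tri.zero ++ v := by
        simp [List.replicate_succ, List.append_assoc]
      have heq2 : (u ++ [Tri.zero]) ++ Tri.left :: (List.replicate k Tri.zero ++ Tri.right :: v)
          = u ++ [Tri.zero, Tri.left] ++ (List.replicate k Tri.zero ++ Tri.right :: v) := by
        simp
      rw [heq, heq2] at this
      exact this

lemma exists_first {α : Type*} [DecidableEq α] (a : α) (s : List α) (h : a ∈ s) :
    ∃ u v, s = u ++ a :: v ∧ a ∉ u := by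
  induction s with
  | nil => cases h
  | cons x xs ih =>
    by_cases hx : x = a
    · exact ⟨[], xs, by simp [hx], by simp⟩
    · have hmem : a ∈ xs := by
        rcases List.mem_cons.mp h with h' | h'
        · exact absurd h'.symm hx
        · exact h'
      obtain ⟨u, v, h1, h2⟩ := ih hmem
      exact ⟨x :: u, v, by simp [h1], by
        simp only [List.mem_cons, not_or]
        exact ⟨fun h' => hx h'.symm, h2⟩⟩

lemma exists_last {α : Type*} [DecidableEq α] (a : α) (s : List α) (h : a ∈ s) :
    ∃ u v, s = u ++ a :: v ∧ a ∉ v := by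
  induction s with
  | nil => cases h
  | cons x xs ih =>
    by_cases hx : a ∈ xs
    · obtain ⟨u, v, h1, h2⟩ := ih hx
      exact ⟨x :: u, v, by simp [h1], h2⟩
    · have hxa : x = a := by
        rcases List.mem_cons.mp h with h' | h'
        · exact h'.symm
        · exact absurd h' hx
      exact ⟨[], xs, by simp [hxa], hx⟩

lemma motzkin_to_zero : ∀ (m : ℕ) (s : List Tri), IsMotzkin s → s.count Tri.left = m →
    MoveEquiv s (List.replicate s.length Tri.zero) := by
  intro m
  induction m with
  | zero =>
    intro s hm hc
    have hr : s.count Tri.right = 0 := by rw [← hm.2, hc]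
    have hall : ∀ x ∈ s, x = Tri.zero := by
      intro x hx
      cases x with
      | zero => rfl
      | left => exact absurd hx (List.count_eq_zero.mp hc)
      | right => exact absurd hx (List.count_eq_zero.mp hr)
    have hsz : s = List.replicate s.length Tri.zero := List.eq_replicate_length.mpr hall
    rw [← hsz]
    exact Relation.ReflTransGen.refl
  | succ m ih =>
    intro s hm hc
    have hr : s.count Tri.right = m + 1 := by rw [← hm.2, hc]
    have hmem : Tri.right ∈ s := by rw [← List.count_pos_iff, hr]; omega
    obtain ⟨a, b, hab, hnra⟩ := exists_first Tri.right s hmem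
    have hgood : Good s := ((isMotzkin_iff s).mp hm).1
    have hra : a.count Tri.right = 0 := List.count_eq_zero.mpr hnra
    have hla : Tri.left ∈ a := by
      have hpre : 0 ≤ Ht (a ++ [Tri.right]) := hgood _ ⟨b, by simp [hab]⟩
      rw [Ht_eq] at hpre
      simp only [List.count_append] at hpre
      simpa [List.count_cons, hra] using hpre
    obtain ⟨a1, a2, ha12, hnl2⟩ := exists_last Tri.left a hla
    have hnr2 : Tri.right ∉ a2 := fun h => hnra (by rw [ha12]; simp [h])
    have ha2 : a2 = List.replicate a2.length Tri.zero := by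
      apply List.eq_replicate_length.mpr
      intro x hx
      cases x with
      | zero => rfl
      | left => exact absurd hx hnl2
      | right => exact absurd hx hnr2
    set k := a2.length with hk
    have hs : s = a1 ++ Tri.left :: (List.replicate k Tri.zero ++ Tri.right :: b) := by
      rw [hab, ha12]
      rw [show a2 = List.replicate k Tri.zero from ha2]
      simp
    have hchain : MoveEquiv s (a1 ++ List.replicate (k + 2) Tri.zero ++ b) := by
      rw [hs]; exact chain_lemma k a1 b
    set t := a1 ++ List.replicate (k + 2) Tri.zero ++ b with ht
    have hmt : IsMotzkin t := moveEquiv_motzkin hchain hm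
    have hct : t.count Tri.left = m := by
      have h1 : s.count Tri.left = t.count Tri.left + 1 := by
        rw [hs, ht]
        simp [List.count_append, List.count_cons, List.count_replicate]
        omega
      omega
    have hlen : t.length = s.length := by
      rw [hs, ht]
      simp
      omega
    have hfin := ih t hmt hct
    rw [hlen] at hfin
    exact hchain.trans hfin


/-- A string `s ∈ Σ^n` is a Motzkin path if and only if it is equivalent under the
local moves to the all-zeros string `c_{0,0} = 0^n`. -/
theorem stmt1 (n : ℕ) (s : List Tri) (hs : s.length = n) :
    IsMotzkin s ↔ MoveEquiv s (List.replicate n Tri.zero) := by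
  subst hs
  constructor
  · intro hm
    exact motzkin_to_zero _ s hm rfl
  · intro h
    have hsym : MoveEquiv (List.replicate s.length Tri.zero) s :=
      (@Relation.ReflTransGen.stdSymm _ Move ⟨fun _ _ hm => move_symm hm⟩).symm _ _ h
    exact moveEquiv_motzkin hsym (motzkin_replicate s.length)
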